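/- arXiv:2401.13580 — 3 statements merged into one kernel-verified Lean document; each statement's English description precedes it below -/
import Mathlib

section
/- Let p ≡ 1 (mod 3) be a prime, λ a cubic residue character modulo p, and x an integer coprime to p. Then |Σ_{b=0}^{p−1} e^{2πi x b³ / p}| ≤ 2√p. -/
/-!
For `n ∣ q - 1` pick a multiplicative character `χ` of order `n` on `𝔽_q`. For `u ≠ 0` the number
of `n`-th roots of `u` is `∑_{j<n} χʲ(u)`, so `∑_b ψ(bⁿ) = ∑_{0<j<n} g(χʲ, ψ)`, a sum of
`n - 1` Gauss sums of absolute value `√q`. For `n = 3` this gives `2√p`.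
-/

open Finset

/-- The additive character `a ↦ e^{2πi a/p}` on `ℤ/pℤ`. -/
noncomputable def eZMod (p : ℕ) (a : ZMod p) : ℂ :=
  Complex.exp (2 * Real.pi * Complex.I * a.val / p)

open Polynomial

theorem Polynomial.card_nthRootsFinset_le {R : Type*} [CommRing R] [IsDomain R] (n : ℕ) (a : R) :
    #(nthRootsFinset n a) ≤ n := by
  classical
  rw [nthRootsFinset_def]
  exact (Multiset.toFinset_card_le _).trans (card_nthRoots n a)

theorem sum_pow_comp_eq_sum_card_nthRootsFinset_nsmul {R M : Type*} [CommRing R] [IsDomain R]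
    [Fintype R] [DecidableEq R] [AddCommMonoid M] {n : ℕ} (hn : 0 < n) (f : R → M) :
    ∑ b, f (b ^ n) = ∑ u, #(nthRootsFinset n u) • f u := by
  rw [← sum_fiberwise univ (· ^ n) fun b ↦ f (b ^ n)]
  refine sum_congr rfl fun u _ ↦ ?_
  have hfiber : ({b | b ^ n = u} : Finset R) = nthRootsFinset n u := by
    ext b
    simp [mem_nthRootsFinset hn]
  rw [← hfiber, ← sum_const]
  exact sum_congr rfl fun b hb ↦ by rw [(mem_filter.mp hb).2]

namespace MulChar

theorem apply_pow_orderOf {M R : Type*} [CommMonoid M] [CommMonoidWithZero R]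
    (χ : MulChar M R) (a : Mˣ) : χ a ^ orderOf χ = 1 := by
  rw [← pow_apply_coe, pow_orderOf_eq_one, one_apply_coe]

variable {R : Type*} [CommRing R] {n : ℕ}

theorem sum_range_pow_apply [IsDomain R] [DecidableEq R] {M : Type*} [CommMonoid M]
    {χ : MulChar M R} (hχ : orderOf χ = n) {u : M} (hu : IsUnit u) :
    ∑ j ∈ range n, (χ ^ j) u = if χ u = 1 then (n : R) else 0 := by
  subst hχ
  obtain ⟨a, rfl⟩ := hu
  simp_rw [pow_apply_coe]
  split_ifs with h
  · simp [h]
  · have h_geom := geom_sum_mul (χ a) (orderOf χ)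
    rw [apply_pow_orderOf, sub_self, mul_eq_zero] at h_geom
    exact h_geom.resolve_right (sub_ne_zero.mpr h)

theorem sum_sum_range_pow_apply [IsDomain R] {M : Type*} [CommRing M] [Fintype M] [DecidableEq M]
    {χ : MulChar M R} (hχ : orderOf χ = n) :
    ∑ u, ∑ j ∈ range n, (χ ^ j) u = Fintype.card Mˣ := by
  have hn : 0 < n := hχ ▸ χ.orderOf_pos
  rw [sum_comm, sum_eq_single_of_mem 0 (mem_range.mpr hn), pow_zero, sum_one_eq_card_units]
  intro j hj hj0
  refine sum_eq_zero_of_ne_one fun h ↦ hj0 ?_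
  exact Nat.eq_zero_of_dvd_of_lt (hχ ▸ orderOf_dvd_of_pow_eq_one h) (mem_range.mp hj)

variable {F : Type*} [Field F] [DecidableEq F] [DecidableEq R] {χ : MulChar F R}

theorem natCast_ite_eq_sum_range_pow_apply [IsDomain R] (hχ : orderOf χ = n) (u : F) :
    ((if u = 0 then 1 else if χ u = 1 then n else 0 : ℕ) : R) =
      (if u = 0 then 1 else 0) + ∑ j ∈ range n, (χ ^ j) u := by
  by_cases hu : u = 0
  · simp [hu]
  · simp [hu, sum_range_pow_apply hχ (Ne.isUnit hu), apply_ite (Nat.cast (R := R))]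

variable [Fintype F]

theorem card_nthRootsFinset_le_ite (hχ : orderOf χ = n) (u : F) :
    #(nthRootsFinset n u) ≤ if u = 0 then 1 else if χ u = 1 then n else 0 := by
  have hn : 0 < n := hχ ▸ χ.orderOf_pos
  split_ifs with hu hχu
  · refine card_le_one.mpr fun a ha b hb ↦ ?_
    rw [mem_nthRootsFinset hn, hu, pow_eq_zero_iff hn.ne'] at ha hb
    rw [ha, hb]
  · exact card_nthRootsFinset_le n u
  · refine (card_eq_zero.mpr (eq_empty_of_forall_notMem fun b hb ↦ hχu ?_)).le
    rw [mem_nthRootsFinset hn] at hb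
    have hb0 : b ≠ 0 := by rintro rfl; exact hu (by rw [← hb, zero_pow hn.ne'])
    rw [← hb, map_pow, ← hχ]
    exact apply_pow_orderOf χ (Units.mk0 b hb0)

/- Double counting: each fibre is bounded by the right-hand side (`card_nthRootsFinset_le_ite`),
and both sides sum to `#F`, the right one by orthogonality of the powers of `χ`. -/
theorem card_nthRootsFinset_eq_ite [IsDomain R] [CharZero R] (hχ : orderOf χ = n) (u : F) :
    #(nthRootsFinset n u) = if u = 0 then 1 else if χ u = 1 then n else 0 := by
  have hn : 0 < n := hχ ▸ χ.orderOf_pos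
  have hcount : ∑ u : F, #(nthRootsFinset n u) = Fintype.card F := by
    have := sum_pow_comp_eq_sum_card_nthRootsFinset_nsmul hn fun _ : F ↦ (1 : ℕ)
    simpa using this.symm
  have hsum : ∑ u : F, (if u = 0 then 1 else if χ u = 1 then n else 0) = Fintype.card F := by
    suffices h : ∑ u : F, ((if u = 0 then 1 else if χ u = 1 then n else 0 : ℕ) : R) =
        Fintype.card F by exact_mod_cast h
    simp_rw [natCast_ite_eq_sum_range_pow_apply hχ, sum_add_distrib, sum_ite_eq', mem_univ,
      if_true, sum_sum_range_pow_apply hχ, Fintype.card_units, Nat.cast_sub Fintype.card_pos]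
    ring
  exact (sum_eq_sum_iff_of_le fun u _ ↦ card_nthRootsFinset_le_ite hχ u).mp
    (hcount.trans hsum.symm) u (mem_univ u)

end MulChar

theorem sum_addChar_pow_eq_sum_gaussSum {F R : Type*} [Field F] [Fintype F] [CommRing R]
    [IsDomain R] [CharZero R] {n : ℕ} {χ : MulChar F R} (hχ : orderOf χ = n)
    {ψ : AddChar F R} (hψ : ψ ≠ 1) :
    ∑ b, ψ (b ^ n) = ∑ j ∈ Ico 1 n, gaussSum (χ ^ j) ψ := by
  classical
  have hn : 0 < n := hχ ▸ χ.orderOf_pos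
  calc ∑ b, ψ (b ^ n) = ∑ u, (#(nthRootsFinset n u) : R) * ψ u := by
        simp_rw [sum_pow_comp_eq_sum_card_nthRootsFinset_nsmul hn, nsmul_eq_mul]
    _ = ∑ u, ((if u = 0 then 1 else 0) + ∑ j ∈ range n, (χ ^ j) u) * ψ u := by
        simp_rw [MulChar.card_nthRootsFinset_eq_ite hχ,
          MulChar.natCast_ite_eq_sum_range_pow_apply hχ]
    _ = 1 + ∑ j ∈ range n, gaussSum (χ ^ j) ψ := by
        simp_rw [add_mul, sum_add_distrib, ite_mul, one_mul, zero_mul, sum_ite_eq', mem_univ,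
          if_true, AddChar.map_zero_eq_one, sum_mul, gaussSum]
        rw [sum_comm]
    _ = ∑ j ∈ Ico 1 n, gaussSum (χ ^ j) ψ := by
        rw [sum_range_eq_add_Ico _ hn, pow_zero, gaussSum_one_left hψ, ← add_assoc,
          add_neg_cancel, zero_add]

theorem norm_gaussSum {F : Type*} [Field F] [Fintype F] {χ : MulChar F ℂ} (hχ : χ ≠ 1)
    {ψ : AddChar F ℂ} (hψ : ψ ≠ 1) :
    ‖gaussSum χ ψ‖ = √(Fintype.card F) := by
  have hsq : ‖gaussSum χ ψ‖ ^ 2 = Fintype.card F := by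
    have h : (‖gaussSum χ ψ‖ : ℂ) ^ 2 = Fintype.card F := by
      rw [← Complex.mul_conj', starRingEnd_apply, star_gaussSum_eq,
        gaussSum_mul_gaussSum_eq_card hχ (AddChar.IsPrimitive.of_ne_one hψ)]
    exact_mod_cast h
  rw [← hsq, Real.sqrt_sq (norm_nonneg _)]

theorem norm_sum_addChar_pow_le {F : Type*} [Field F] [Fintype F] {n : ℕ}
    (hn : n ∣ Fintype.card F - 1) {ψ : AddChar F ℂ} (hψ : ψ ≠ 1) :
    ‖∑ b, ψ (b ^ n)‖ ≤ (n - 1) * √(Fintype.card F) := by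
  have hn0 : 0 < n := Nat.pos_of_dvd_of_pos hn (Nat.sub_pos_of_lt Fintype.one_lt_card)
  obtain ⟨χ, hχ⟩ :=
    MulChar.exists_mulChar_orderOf F hn (Complex.isPrimitiveRoot_exp n hn0.ne')
  have hχj : ∀ j ∈ Ico 1 n, χ ^ j ≠ 1 := by
    intro j hj h
    have := Nat.le_of_dvd (mem_Ico.mp hj).1 (hχ ▸ orderOf_dvd_of_pow_eq_one h)
    exact (mem_Ico.mp hj).2.not_ge this
  calc ‖∑ b, ψ (b ^ n)‖ = ‖∑ j ∈ Ico 1 n, gaussSum (χ ^ j) ψ‖ := by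
        rw [sum_addChar_pow_eq_sum_gaussSum hχ hψ]
    _ ≤ ∑ j ∈ Ico 1 n, ‖gaussSum (χ ^ j) ψ‖ := norm_sum_le _ _
    _ = (n - 1) * √(Fintype.card F) := by
        rw [sum_congr rfl fun j hj ↦ norm_gaussSum (hχj j hj) hψ, sum_const, Nat.card_Ico,
          nsmul_eq_mul, Nat.cast_sub hn0, Nat.cast_one]

/-- For a prime `p ≡ 1 (mod 3)` and `x` coprime to `p`, the cubic exponential sum
satisfies `|∑_b e(x b³/p)| ≤ 2√p`. -/
theorem cubic_exp_sum_bound (p : ℕ) [Fact p.Prime] (hp : p % 3 = 1)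
    (x : ZMod p) (hx : x ≠ 0) :
    ‖∑ b : ZMod p, eZMod p (x * b ^ 3)‖ ≤ 2 * Real.sqrt p := by
  have hψ : ZMod.stdAddChar.mulShift x ≠ 1 := ZMod.isPrimitive_stdAddChar p hx
  have h3 : 3 ∣ Fintype.card (ZMod p) - 1 := by rw [ZMod.card]; omega
  have hsum : ∑ b : ZMod p, eZMod p (x * b ^ 3) = ∑ b, ZMod.stdAddChar.mulShift x (b ^ 3) := by
    simp [eZMod, AddChar.mulShift_apply, ZMod.stdAddChar_apply, ZMod.toCircle_apply]
  have hbound := norm_sum_addChar_pow_le h3 hψ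
  norm_num [ZMod.card] at hbound
  rwa [hsum]
end

section
/- Let p ≡ 1 (mod 3) be prime, n an integer coprime to p, χ a nontrivial Dirichlet character modulo p, and a₁, a₂ the nontrivial cube roots of 1 modulo p. Then |S_p(n;χ)|² = p(1 + χ(a₁) + χ(a₂)) + Σ_{a=2, a≠a₁,a₂}^{p−1} χ(a) (g(λ) λ(x̄_a) + g(λ²) λ²(x̄_a)), where S_p(n;χ) = Σ_{a=1}^{p} χ(a) e^{2πi n a³/p}, λ is a cubic residue character modulo p, x_a = n(a³−1), and x̄_a is its inverse modulo p. -/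
open Finset

/-- The classical Gauss sum of a Dirichlet character mod `p`. -/
noncomputable def gaussSumChar (p : ℕ) [NeZero p] (χ : DirichletCharacter ℂ p) : ℂ :=
  ∑ a : ZMod p, χ a * eZMod p a

/-- The Kummer sum `S_p(n;χ) = ∑_a χ(a) e(n a³/p)` weighted by a Dirichlet
character `χ` mod `p`. -/
noncomputable def kummerSum (p : ℕ) [NeZero p] (n : ZMod p)
    (χ : DirichletCharacter ℂ p) : ℂ :=
  ∑ a : ZMod p, χ a * eZMod p (n * a ^ 3)

/-! Writing `|S|² = S̄ S` and substituting `x = t b` in the inner sum gives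
`|S|² = ∑_t χ(t) ∑_b e(n (t³ - 1) b³)`, where `b = 0` contributes `∑_t χ(t) = 0`. For `t³ = 1` the
inner sum is `p`. Otherwise, since `y` has exactly `1 + λ(y) + λ²(y)` cube roots, the inner sum
`∑_b e(c b³)` with `c = n (t³ - 1)` is `∑_y (1 + λ(y) + λ²(y)) e(c y)`, which is
`λ(c⁻¹) g(λ) + λ²(c⁻¹) g(λ²)`. -/

lemma IsPrimitiveRoot.eq_one_or_eq_or_eq_of_pow_three_eq_one {K : Type*} [CommRing K] [IsDomain K]
    {ω ω' z : K} (hω : IsPrimitiveRoot ω 3) (hω' : ω' ^ 3 = 1) (hω'1 : ω' ≠ 1) (hne : ω ≠ ω')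
    (hz : z ^ 3 = 1) : z = 1 ∨ z = ω ∨ z = ω' := by
  obtain ⟨i, hi, rfl⟩ := hω.eq_pow_of_pow_eq_one hz
  obtain ⟨j, hj, rfl⟩ := hω.eq_pow_of_pow_eq_one hω'
  interval_cases i <;> interval_cases j <;> simp_all

section FiniteField

variable {F R : Type*} [Field F] [Fintype F]

lemma MulChar.exists_pow_orderOf_eq_of_apply_eq_one [CommMonoidWithZero R] (χ : MulChar F R)
    {y : F} (hy : y ≠ 0) (h : χ y = 1) : ∃ b : F, b ^ orderOf χ = y := by
  obtain ⟨g, hg⟩ := IsCyclic.exists_generator (α := Fˣ)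
  have hpow (u : Fˣ) : ∃ k : ℕ, g ^ k = u := mem_powers_iff_mem_zpowers.mpr (hg u)
  obtain ⟨k, hk⟩ := hpow (Units.mk0 y hy)
  have hχk : χ ^ k = 1 := by
    refine MulChar.ext fun u => ?_
    obtain ⟨j, rfl⟩ := hpow u
    rw [MulChar.pow_apply_coe, MulChar.one_apply_coe, Units.val_pow_eq_pow_val, map_pow,
      ← pow_mul, mul_comm, pow_mul, ← map_pow, ← Units.val_pow_eq_pow_val, hk, Units.val_mk0, h,
      one_pow]
  obtain ⟨m, rfl⟩ := orderOf_dvd_of_pow_eq_one hχk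
  refine ⟨(g : F) ^ m, ?_⟩
  rw [← pow_mul, mul_comm, ← Units.val_pow_eq_pow_val, hk, Units.val_mk0]

lemma card_filter_pow_eq [DecidableEq F] [CommRing R] [IsDomain R] {n : ℕ} {ω : F}
    (hω : IsPrimitiveRoot ω n) {χ : MulChar F R} (hχ : orderOf χ = n) (y : F) :
    (#{b | b ^ n = y} : R) = ∑ i ∈ range n, χ y ^ i := by
  have hn : 0 < n := hχ ▸ orderOf_pos χ
  rcases eq_or_ne y 0 with rfl | hy
  -- both sides are `1`, the right one through `χ 0 ^ 0 = 1`
  · have : ({b | b ^ n = 0} : Finset F) = {0} := by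
      ext b; simp [pow_eq_zero_iff hn.ne']
    rw [this, card_singleton, MulChar.map_zero]
    simp [zero_pow_eq, hn]
  have hcard : #{b | b ^ n = y} = Multiset.card (Polynomial.nthRoots n y) := by
    rw [← Multiset.toFinset_card_of_nodup (hω.nthRoots_nodup hy)]
    congr 1
    ext b
    simp [Polynomial.mem_nthRoots hn]
  rw [hcard, hω.card_nthRoots]
  split_ifs with hroot
  · obtain ⟨α, rfl⟩ := hroot
    have hα : α ≠ 0 := by rintro rfl; exact hy (zero_pow hn.ne')
    rw [map_pow, ← MulChar.pow_apply' χ hn.ne', ← hχ, pow_orderOf_eq_one,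
      MulChar.one_apply (isUnit_iff_ne_zero.mpr hα)]
    simp
  · have hχy : χ y ≠ 1 := fun h =>
      hroot (hχ ▸ χ.exists_pow_orderOf_eq_of_apply_eq_one hy h)
    have hχy' : χ y ^ n = 1 := by
      rw [← MulChar.pow_apply' χ hn.ne', ← hχ, pow_orderOf_eq_one,
        MulChar.one_apply (isUnit_iff_ne_zero.mpr hy)]
    have := geom_sum_mul (χ y) n
    rw [hχy', sub_self] at this
    exact_mod_cast ((mul_eq_zero.mp this).resolve_right (sub_ne_zero.mpr hχy)).symm

theorem sum_addChar_mul_pow_eq_sum_gaussSum [DecidableEq F] [CommRing R] [IsDomain R] {n : ℕ}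
    {ω : F} (hω : IsPrimitiveRoot ω n) {χ : MulChar F R} (hχ : orderOf χ = n) {ψ : AddChar F R}
    (hψ : ψ.IsPrimitive) {c : F} (hc : c ≠ 0) :
    ∑ b, ψ (c * b ^ n) = ∑ i ∈ Ico 1 n, χ c⁻¹ ^ i * gaussSum (χ ^ i) ψ := by
  have hn : 0 < n := hχ ▸ orderOf_pos χ
  calc ∑ b, ψ (c * b ^ n)
      = ∑ y, (#{b | b ^ n = y} : R) * ψ (c * y) := by
        rw [← sum_fiberwise' univ (· ^ n) (fun y => ψ (c * y))]
        simp only [sum_const, nsmul_eq_mul]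
    _ = ∑ i ∈ range n, ∑ y, χ y ^ i * ψ (c * y) := by
        simp only [card_filter_pow_eq hω hχ, sum_mul]
        exact sum_comm
    _ = ∑ i ∈ Ico 1 n, χ c⁻¹ ^ i * gaussSum (χ ^ i) ψ := by
        have hψc : ∑ y, ψ (c * y) = 0 := by
          simpa [mul_comm c, hc] using AddChar.sum_mulShift c hψ
        rw [sum_range_eq_add_Ico _ hn]
        simp only [pow_zero, one_mul, hψc, zero_add]
        refine sum_congr rfl fun i hi => ?_
        have hi0 : i ≠ 0 := Nat.one_le_iff_ne_zero.mp (mem_Ico.mp hi).1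
        have hshift := gaussSum_mulShift_eq (χ ^ i) ψ (Units.mk0 c hc)
        rw [Units.val_mk0, MulChar.inv_apply', MulChar.pow_apply' χ hi0] at hshift
        rw [← hshift]
        simp only [gaussSum, AddChar.mulShift_apply, MulChar.pow_apply' χ hi0]

lemma star_mul_sum_mulChar_mul_addChar_pow {χ : MulChar F ℂ} (hχ : χ ≠ 1) (ψ : AddChar F ℂ)
    (a : F) (k : ℕ) (b : F) :
    star (χ b * ψ (a * b ^ k)) * ∑ x, χ x * ψ (a * x ^ k) =
      ∑ t, χ t * ψ (a * (t ^ k - 1) * b ^ k) := by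
  rw [star_mul', MulChar.star_apply', ← starRingEnd_apply, ← AddChar.map_neg_eq_conj,
    MulChar.inv_apply']
  rcases eq_or_ne b 0 with rfl | hb
  · have hψ0 (t : F) : ψ (a * (t ^ k - 1) * 0 ^ k) = 1 := by
      rcases k with _ | k <;> simp
    simp only [inv_zero, MulChar.map_zero, zero_mul, hψ0, mul_one]
    exact (MulChar.sum_eq_zero_of_ne_one hχ).symm
  · rw [← Equiv.sum_comp (Equiv.mulRight₀ b hb), mul_sum]
    refine sum_congr rfl fun t _ => ?_
    have hχ : χ b⁻¹ * χ (t * b) = χ t := by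
      rw [← map_mul, mul_comm t, ← mul_assoc, inv_mul_cancel₀ hb, one_mul]
    have hψ : ψ (-(a * b ^ k)) * ψ (a * (t * b) ^ k) = ψ (a * (t ^ k - 1) * b ^ k) := by
      rw [← AddChar.map_add_eq_mul]
      ring_nf
    rw [mul_mul_mul_comm]
    exact congrArg₂ (· * ·) hχ hψ

theorem sq_norm_sum_mulChar_mul_addChar_pow {χ : MulChar F ℂ} (hχ : χ ≠ 1)
    (ψ : AddChar F ℂ) (a : F) (k : ℕ) :
    (‖∑ x, χ x * ψ (a * x ^ k)‖ : ℂ) ^ 2 = ∑ t, χ t * ∑ b, ψ (a * (t ^ k - 1) * b ^ k) := by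
  rw [← Complex.mul_conj', mul_comm, starRingEnd_apply, star_sum, sum_mul]
  simp only [star_mul_sum_mulChar_mul_addChar_pow hχ, mul_sum]
  exact sum_comm

end FiniteField

section ZMod

variable (p : ℕ) [NeZero p]

lemma eZMod_eq_stdAddChar : eZMod p = ZMod.stdAddChar := by
  ext a
  rw [eZMod, ZMod.stdAddChar_apply, ZMod.toCircle_apply]

lemma gaussSumChar_eq_gaussSum (χ : DirichletCharacter ℂ p) :
    gaussSumChar p χ = gaussSum χ ZMod.stdAddChar := by
  rw [gaussSumChar, gaussSum, eZMod_eq_stdAddChar]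

lemma kummerSum_eq_sum_stdAddChar (n : ZMod p) (χ : DirichletCharacter ℂ p) :
    kummerSum p n χ = ∑ a, χ a * ZMod.stdAddChar (n * a ^ 3) := by
  rw [kummerSum, eZMod_eq_stdAddChar]

end ZMod

theorem kummer_sum_sq_abs_eq_general (p : ℕ) [Fact p.Prime]
    (n : ZMod p) (hn : n ≠ 0)
    (χ : DirichletCharacter ℂ p) (hχ : χ ≠ 1)
    (lam : DirichletCharacter ℂ p) (hord : orderOf lam = 3)
    (a₁ a₂ : ZMod p) (h₁ : a₁ ^ 3 = 1) (h₂ : a₂ ^ 3 = 1)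
    (h₁' : a₁ ≠ 1) (h₂' : a₂ ≠ 1) (hne : a₁ ≠ a₂) :
    ((‖kummerSum p n χ‖) ^ 2 : ℂ) =
      p * (1 + χ a₁ + χ a₂) +
        ∑ a ∈ (Finset.univ : Finset (ZMod p)) \ {0, 1, a₁, a₂},
          χ a * (gaussSumChar p lam * lam (n * (a ^ 3 - 1))⁻¹ +
            gaussSumChar p (lam ^ 2) * (lam (n * (a ^ 3 - 1))⁻¹) ^ 2) := by
  have hω : IsPrimitiveRoot a₁ 3 := IsPrimitiveRoot.iff_orderOf.mpr (orderOf_eq_prime h₁ h₁')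
  have hroot {t : ZMod p} (ht : t ^ 3 = 1) :
      ∑ b, ZMod.stdAddChar (n * (t ^ 3 - 1) * b ^ 3) = (p : ℂ) := by
    simp [ht]
  rw [kummerSum_eq_sum_stdAddChar, sq_norm_sum_mulChar_mul_addChar_pow hχ,
    ← sum_sdiff (subset_univ {0, 1, a₁, a₂}), add_comm]
  congr 1
  · have h₁0 : a₁ ≠ 0 := by rintro rfl; norm_num at h₁
    have h₂0 : a₂ ≠ 0 := by rintro rfl; norm_num at h₂
    rw [sum_insert (by simp [h₁0.symm, h₂0.symm]), sum_insert (by simp [h₁'.symm, h₂'.symm]),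
      sum_insert (by simpa using hne), sum_singleton, hroot (one_pow 3), hroot h₁, hroot h₂,
      MulChar.map_zero, map_one]
    ring
  · refine sum_congr rfl fun t ht => ?_
    have ht3 : t ^ 3 ≠ 1 := fun h => by
      rcases hω.eq_one_or_eq_or_eq_of_pow_three_eq_one h₂ h₂' hne h with rfl | rfl | rfl <;>
        simp at ht
    have hc : n * (t ^ 3 - 1) ≠ 0 := mul_ne_zero hn (sub_ne_zero.mpr ht3)
    rw [sum_addChar_mul_pow_eq_sum_gaussSum hω hord (ZMod.isPrimitive_stdAddChar p) hc,
      gaussSumChar_eq_gaussSum, gaussSumChar_eq_gaussSum, show Ico 1 3 = {1, 2} from rfl,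
      sum_pair (by norm_num), pow_one, pow_one]
    ring

/-- Lemma 1 (nonprincipal case): for a prime `p ≡ 1 (mod 3)`, `n` coprime to `p`, a
nontrivial Dirichlet character `χ` mod `p` and `a₁, a₂` the nontrivial cube roots of unity,
`|S_p(n;χ)|² = p(1 + χ(a₁) + χ(a₂)) + ∑_{a ∉ {0,1,a₁,a₂}} χ(a)(g(λ)λ(x̄_a) + g(λ²)λ²(x̄_a))`
where `x_a = n(a³ - 1)`. -/
theorem kummer_sum_sq_abs_eq (p : ℕ) [Fact p.Prime] (hp : p % 3 = 1)
    (n : ZMod p) (hn : n ≠ 0)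
    (χ : DirichletCharacter ℂ p) (hχ : χ ≠ 1)
    (lam : DirichletCharacter ℂ p) (hord : orderOf lam = 3)
    (a₁ a₂ : ZMod p) (h₁ : a₁ ^ 3 = 1) (h₂ : a₂ ^ 3 = 1)
    (h₁' : a₁ ≠ 1) (h₂' : a₂ ≠ 1) (hne : a₁ ≠ a₂) :
    ((‖kummerSum p n χ‖) ^ 2 : ℂ) =
      p * (1 + χ a₁ + χ a₂) +
        ∑ a ∈ (Finset.univ : Finset (ZMod p)) \ {0, 1, a₁, a₂},
          χ a * (gaussSumChar p lam * lam (n * (a ^ 3 - 1))⁻¹ +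
            gaussSumChar p (lam ^ 2) * (lam (n * (a ^ 3 - 1))⁻¹) ^ 2) :=
  kummer_sum_sq_abs_eq_general p n hn χ hχ lam hord a₁ a₂ h₁ h₂ h₁' h₂' hne
end

section
/- Let p ≡ 1 (mod 3) be prime and n an integer coprime to p. Then the second moment Σ_{χ mod p} |S_p(n;χ)|² over all Dirichlet characters χ modulo p satisfies Σ_{χ mod p} |S_p(n;χ)|² = p² + O(p^{3/2}); more precisely, |Σ_{χ mod p} |S_p(n;χ)|² − p²| ≤ C·p^{3/2} for an absolute constant C. -/
open Finset

/-!
Expanding `|∑ₐ χ(a) f(a)|²` and summing over `χ` first, the orthogonality relations for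
Dirichlet characters collapse the double sum to its diagonal on units:
`∑_χ |∑ₐ χ(a) f(a)|² = φ(p) ∑_{a unit} |f(a)|²`. For the Kummer sum `|f(a)| = 1`, so the second
moment is exactly `φ(p)² = (p - 1)²`, whose distance to `p²` is `2p - 1`.
-/

open ComplexConjugate

namespace DirichletCharacter

lemma conj_apply_of_isUnit {n : ℕ} (χ : DirichletCharacter ℂ n) {b : ZMod n} (hb : IsUnit b) :
    conj (χ b) = χ b⁻¹ := by
  rw [← RCLike.star_def, MulChar.star_apply', MulChar.inv_apply, ← hb.unit_spec,
    Ring.inverse_unit, ZMod.inv_coe_unit]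

variable {n : ℕ} [NeZero n]

lemma sum_apply_mul_conj_apply (a b : ZMod n) :
    ∑ χ : DirichletCharacter ℂ n, χ a * conj (χ b) =
      if a = b ∧ IsUnit b then (n.totient : ℂ) else 0 := by
  by_cases hb : IsUnit b
  · rw [sum_congr rfl fun χ _ => by rw [conj_apply_of_isUnit χ hb, mul_comm],
      sum_char_inv_mul_char_eq ℂ hb a]
    simp [hb, eq_comm]
  · simp [hb, fun χ : DirichletCharacter ℂ n => χ.map_nonunit hb]

theorem sum_norm_sq_sum_mul (f : ZMod n → ℂ) :
    ∑ χ : DirichletCharacter ℂ n, ‖∑ a, χ a * f a‖ ^ 2 =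
      n.totient * ∑ a with IsUnit a, ‖f a‖ ^ 2 := by
  apply Complex.ofReal_injective
  push_cast
  simp_rw [← Complex.mul_conj']
  calc ∑ χ : DirichletCharacter ℂ n, (∑ a, χ a * f a) * conj (∑ b, χ b * f b)
      = ∑ a, ∑ b, (∑ χ : DirichletCharacter ℂ n, χ a * conj (χ b)) * (f a * conj (f b)) := by
        simp only [map_sum, map_mul, sum_mul_sum]
        rw [sum_comm]
        refine sum_congr rfl fun a _ => ?_
        rw [sum_comm]
        exact sum_congr rfl fun b _ => by rw [sum_mul]; exact sum_congr rfl fun χ _ => by ring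
    _ = ∑ a with IsUnit a, n.totient * (f a * conj (f a)) := by
        simp only [sum_apply_mul_conj_apply, ite_and, ite_mul, zero_mul, sum_ite_eq, mem_univ,
          if_true, sum_filter]
    _ = _ := by rw [mul_sum]

end DirichletCharacter

lemma ZMod.card_filter_isUnit (n : ℕ) [NeZero n] :
    #{a : ZMod n | IsUnit a} = n.totient := by
  rw [← ZMod.card_units_eq_totient, ← card_univ, ← card_map ⟨Units.val, Units.val_injective⟩]
  congr
  ext a
  simp [IsUnit, eq_comm]

lemma norm_eZMod (p : ℕ) (a : ZMod p) : ‖eZMod p a‖ = 1 := by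
  simp [eZMod, Complex.norm_exp]

lemma sum_norm_sq_kummerSum (p : ℕ) [NeZero p] (m : ZMod p) :
    ∑ χ : DirichletCharacter ℂ p, ‖kummerSum p m χ‖ ^ 2 = (p.totient : ℝ) ^ 2 := by
  simp only [kummerSum, DirichletCharacter.sum_norm_sq_sum_mul, norm_eZMod, one_pow, sum_const,
    ZMod.card_filter_isUnit, nsmul_one]
  ring

/-- Theorem 1: for primes `p ≡ 1 (mod 3)` and `n` coprime to `p`,
`∑_{χ mod p} |S_p(n;χ)|² = p² + O(p^{3/2})`. -/
theorem second_moment_kummer :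
    ∃ C : ℝ, 0 < C ∧ ∀ (p : ℕ) (_ : p.Prime) (_ : p % 3 = 1) (n : ℤ) (_ : Int.gcd n p = 1),
      haveI : Fact p.Prime := ⟨‹p.Prime›⟩
      |(∑ χ : DirichletCharacter ℂ p, ‖kummerSum p (n : ZMod p) χ‖ ^ 2) -
        (p : ℝ) ^ 2| ≤ C * (p : ℝ) ^ ((3 : ℝ) / 2) := by
  refine ⟨2, two_pos, fun p hp _ n _ => ?_⟩
  have hp1 : (1 : ℝ) ≤ p := mod_cast hp.one_lt.le
  have hp_le : (p : ℝ) ≤ (p : ℝ) ^ ((3 : ℝ) / 2) := by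
    simpa using Real.rpow_le_rpow_of_exponent_le hp1 (by norm_num : (1 : ℝ) ≤ 3 / 2)
  rw [sum_norm_sq_kummerSum, Nat.totient_prime hp, Nat.cast_sub hp.one_lt.le, Nat.cast_one,
    abs_le]
  constructor <;> nlinarith
end
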